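/- arXiv:1702.05717 — 5 statements merged into one kernel-verified Lean document; each statement's English description precedes it below -/
import Mathlib

section
/- Let f : [0,∞) → ℝ solve f'(v) = ½ α(v) − β(v) f(v) with f(0) = 0, where α, β ≥ 0 are continuous, and suppose ∫_0^∞ β ≤ ε. Then for all v, |f(v) − ½ ∫_0^v α| ≤ (e^{2ε} − 1) · ½ ∫_0^v α. -/
/-! Multiplying `f' = g − β f` by the integrating factor `exp (∫ β)` gives Duhamel's formula
`f b = ∫_a^b exp (−∫_t^b β) g(t) dt` when `f a = 0`. As `0 ≤ 1 − e^{−x} ≤ x` for `x ≥ 0`, the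
kernel differs from `1` by at most `∫_a^b β ≤ ε`, so for `g = α / 2 ≥ 0` the error is at most
`ε ∫ g ≤ (e^{2ε} − 1) ∫ g`. -/

open Real Set intervalIntegral
open MeasureTheory (volume ae_of_all IntegrableOn setIntegral_mono_set)

lemma abs_exp_neg_sub_one_le {x : ℝ} (hx : 0 ≤ x) : |exp (-x) - 1| ≤ x := by
  have hle : exp (-x) ≤ 1 := exp_le_one_iff.mpr (neg_nonpos.mpr hx)
  rw [abs_of_nonpos (sub_nonpos.mpr hle)]
  linarith [add_one_le_exp (-x)]

lemma continuous_integral_left {β : ℝ → ℝ} (hβ : Continuous β) (b : ℝ) :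
    Continuous fun t => ∫ s in t..b, β s :=
  (continuous_primitive (fun _ _ => hβ.intervalIntegrable _ _) b).neg.congr
    fun t => (integral_symm b t).symm

theorem eq_integral_of_hasDerivAt_linear {f g β : ℝ → ℝ} {a b : ℝ}
    (hg : Continuous g) (hβ : Continuous β)
    (hode : ∀ x ∈ uIcc a b, HasDerivAt f (g x - β x * f x) x) :
    f b = exp (-∫ t in a..b, β t) * f a + ∫ t in a..b, exp (-∫ s in t..b, β s) * g t := by
  set B : ℝ → ℝ := fun x => ∫ t in a..x, β t
  have hB : ∀ x, HasDerivAt B (β x) x := fun x => (hβ.integral_hasStrictDerivAt a x).hasDerivAt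
  have hBcont : Continuous B := continuous_iff_continuousAt.mpr fun x => (hB x).continuousAt
  have hderiv : ∀ x ∈ uIcc a b,
      HasDerivAt (fun x => f x * exp (B x)) (exp (B x) * g x) x := fun x hx =>
    ((hode x hx).mul (hB x).exp).congr_deriv (by ring)
  have hFTC : ∫ t in a..b, exp (B t) * g t = f b * exp (B b) - f a := by
    rw [integral_eq_sub_of_hasDerivAt hderiv ((hBcont.rexp.mul hg).intervalIntegrable _ _)]
    simp [B]
  have hkernel : ∀ t, exp (-∫ s in t..b, β s) * g t = exp (-B b) * (exp (B t) * g t) := by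
    intro t
    rw [← integral_interval_sub_left (hβ.intervalIntegrable a b) (hβ.intervalIntegrable a t),
      neg_sub, ← mul_assoc, ← exp_add, neg_add_eq_sub]
  simp_rw [hkernel, integral_const_mul, hFTC]
  rw [exp_neg]
  field_simp
  ring

theorem abs_sub_integral_le_of_hasDerivAt_linear {f g β : ℝ → ℝ} {a b : ℝ} (hab : a ≤ b)
    (hg : Continuous g) (hβ : Continuous β) (hg0 : ∀ t, 0 ≤ g t) (hβ0 : ∀ t, 0 ≤ β t)
    (hfa : f a = 0) (hode : ∀ x ∈ uIcc a b, HasDerivAt f (g x - β x * f x) x) :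
    |f b - ∫ t in a..b, g t| ≤ (∫ t in a..b, β t) * ∫ t in a..b, g t := by
  have hK : Continuous fun t => exp (-∫ s in t..b, β s) * g t :=
    (continuous_integral_left hβ b).neg.rexp.mul hg
  rw [eq_integral_of_hasDerivAt_linear hg hβ hode, hfa, mul_zero, zero_add,
    ← integral_sub (hK.intervalIntegrable _ _) (hg.intervalIntegrable _ _),
    ← integral_const_mul, ← Real.norm_eq_abs]
  refine norm_integral_le_of_norm_le hab (ae_of_all volume fun t ht => ?_)
    ((continuous_const.mul hg).intervalIntegrable _ _)
  have htail : ∫ s in t..b, β s ≤ ∫ s in a..b, β s :=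
    integral_mono_interval ht.1.le ht.2 le_rfl (ae_of_all _ fun s => hβ0 s)
      (hβ.intervalIntegrable _ _)
  have htail0 : 0 ≤ ∫ s in t..b, β s := integral_nonneg ht.2 fun s _ => hβ0 s
  calc ‖exp (-∫ s in t..b, β s) * g t - g t‖
      = |exp (-∫ s in t..b, β s) - 1| * g t := by
        rw [Real.norm_eq_abs, ← sub_one_mul, abs_mul, abs_of_nonneg (hg0 t)]
    _ ≤ (∫ s in a..b, β s) * g t :=
        mul_le_mul_of_nonneg_right ((abs_exp_neg_sub_one_le htail0).trans htail) (hg0 t)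

lemma intervalIntegral_le_integral_Ioi {β : ℝ → ℝ} {a v : ℝ} (hav : a ≤ v)
    (hβ0 : ∀ t, 0 ≤ β t) (hβint : IntegrableOn β (Ioi a)) :
    ∫ t in a..v, β t ≤ ∫ t in Ioi a, β t := by
  rw [integral_of_le hav]
  exact setIntegral_mono_set hβint (ae_of_all _ hβ0) (Ioc_subset_Ioi_self.eventuallyLE)

/-- If `f' = ½α − βf`, `f 0 = 0`, with `α, β ≥ 0` continuous and `∫_0^∞ β ≤ ε`, then
`|f v − ½∫_0^v α| ≤ (e^{2ε} − 1) · ½ ∫_0^v α` for all `v ≥ 0`. -/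
theorem mass_approximation (f α β : ℝ → ℝ) (ε : ℝ)
    (hα : Continuous α) (hβ : Continuous β)
    (hαpos : ∀ v, 0 ≤ α v) (hβpos : ∀ v, 0 ≤ β v)
    (hβint : MeasureTheory.IntegrableOn β (Set.Ioi (0:ℝ)))
    (hβsmall : (∫ t in Set.Ioi (0:ℝ), β t) ≤ ε)
    (hf0 : f 0 = 0)
    (hode : ∀ v : ℝ, 0 ≤ v → HasDerivAt f ((1/2) * α v - β v * f v) v) :
    ∀ v : ℝ, 0 ≤ v →
      |f v - (1/2) * ∫ t in (0:ℝ)..v, α t| ≤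
        (Real.exp (2 * ε) - 1) * ((1/2) * ∫ t in (0:ℝ)..v, α t) := by
  intro v hv
  have hg0 : ∀ t, 0 ≤ (1/2) * α t := fun t => mul_nonneg (by norm_num) (hαpos t)
  have hbound := abs_sub_integral_le_of_hasDerivAt_linear (g := fun t => (1/2) * α t) hv
    (continuous_const.mul hα) hβ hg0 hβpos hf0 fun x hx => hode x (uIcc_of_le hv ▸ hx).1
  rw [integral_const_mul] at hbound
  have hβv : ∫ t in (0:ℝ)..v, β t ≤ ε :=
    (intervalIntegral_le_integral_Ioi hv hβpos hβint).trans hβsmall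
  have hβv0 : 0 ≤ ∫ t in (0:ℝ)..v, β t := integral_nonneg hv fun t _ => hβpos t
  have hε : ε ≤ exp (2 * ε) - 1 := by linarith [add_one_le_exp (2 * ε)]
  exact hbound.trans (mul_le_mul_of_nonneg_right (hβv.trans hε)
    (mul_nonneg (by norm_num) (integral_nonneg hv fun t _ => hαpos t)))
end

section
/- Suppose ∂_v r > 0 and 0 ≤ 2m/r < 1 in a region. Then ∂_v m ≥ 0 there; if moreover ∂_u r < 0, then ∂_u m ≤ 0. Consequently the Hawking mass is non-decreasing in v and non-increasing in u in the exterior (untrapped) region. -/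
/-- The partial derivative in the first (`u`) variable. -/
noncomputable def pdu (f : ℝ → ℝ → ℝ) (u v : ℝ) : ℝ := deriv (fun u' => f u' v) u

/-- The partial derivative in the second (`v`) variable. -/
noncomputable def pdv (f : ℝ → ℝ → ℝ) (u v : ℝ) : ℝ := deriv (fun v' => f u v') v

/-- Monotonicity of the Hawking mass: in a region where `∂_v r > 0`, `r > 0` and
`0 ≤ 2m/r < 1`, the mass equations give `∂_v m ≥ 0`; if moreover `∂_u r < 0`
then `∂_u m ≤ 0`. -/
theorem hawking_mass_monotonicity (r φ m : ℝ → ℝ → ℝ) (S : Set (ℝ × ℝ))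
    (heq_u : ∀ p ∈ S, pdu r p.1 p.2 * pdu m p.1 p.2 =
      (1/2) * (1 - 2 * m p.1 p.2 / r p.1 p.2) * (r p.1 p.2) ^ 2 * (pdu φ p.1 p.2) ^ 2)
    (heq_v : ∀ p ∈ S, pdv r p.1 p.2 * pdv m p.1 p.2 =
      (1/2) * (1 - 2 * m p.1 p.2 / r p.1 p.2) * (r p.1 p.2) ^ 2 * (pdv φ p.1 p.2) ^ 2)
    (hr : ∀ p ∈ S, 0 < r p.1 p.2)
    (hdvr : ∀ p ∈ S, 0 < pdv r p.1 p.2)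
    (hmr : ∀ p ∈ S, 0 ≤ 2 * m p.1 p.2 / r p.1 p.2 ∧ 2 * m p.1 p.2 / r p.1 p.2 < 1) :
    ∀ p ∈ S, 0 ≤ pdv m p.1 p.2 ∧ (pdu r p.1 p.2 < 0 → pdu m p.1 p.2 ≤ 0) := by
  intro p hp
  have h1 : (0:ℝ) < 1 - 2 * m p.1 p.2 / r p.1 p.2 := by linarith [(hmr p hp).2]
  have hrhs : 0 ≤ (1/2) * (1 - 2 * m p.1 p.2 / r p.1 p.2) * (r p.1 p.2) ^ 2 := by
    positivity
  constructor
  · have := heq_v p hp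
    nlinarith [hdvr p hp, sq_nonneg (pdv φ p.1 p.2), mul_nonneg hrhs (sq_nonneg (pdv φ p.1 p.2))]
  · intro hdur
    have := heq_u p hp
    nlinarith [sq_nonneg (pdu φ p.1 p.2), mul_nonneg hrhs (sq_nonneg (pdu φ p.1 p.2))]
end

section
/- Let m : [0,∞) → ℝ satisfy m(v) = ½ e^{−B(v)} ∫_0^v α(v') e^{B(v')} dv' with B(v) = ∫_0^v β, where α(v) = r²(v)(∂_vφ)²(v)/∂_v r(v), β(v) = r(v)(∂_vφ)²(v)/∂_v r(v), ∂_v r = 1/2, r(v) = v/2, and r|∂_vφ|(v) ≤ η·𝟙_{S}(v) + M^{1/2}δ^{−1/2}·𝟙_{[v_0, v_0+δ]}(v) where S = ⋃_{i=1}^{N}[v_*+i², v_*+i²+1]. Then ∫_0^∞ β ≤ C(η² v_*^{−1/2} + M v_0^{−1}) for a universal constant C. -/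
/-!
From `(v/2)|∂_vφ| ≤ a + b` one gets `v (∂_vφ)² ≤ 8 (a² + b²) / v`, and the squares of
the indicator terms are again indicators. On the `i`-th small pulse `1/v ≤ 1/(v_* + i²)` and on
the short pulse `1/v ≤ 1/v₀`, so `v (∂_vφ)²` is dominated by a step function of integral
`8 η² ∑ᵢ 1/(v_* + i²) + 8 M / v₀`. Finally `1/(s² + i²) ≤ 2/(s + i)²`, and
`∑_{i ≥ 1} (s + i)⁻²` telescopes against `1/(s + i - 1) - 1/(s + i)`, giving
`∑ᵢ 1/(v_* + i²) ≤ 2/√v_*`.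
-/

open MeasureTheory Set

lemma sum_Icc_one_div_add_sq_le_sub {s : ℝ} (hs : 0 < s) (N : ℕ) :
    ∑ i ∈ Finset.Icc 1 N, 1 / (s + i) ^ 2 ≤ 1 / s - 1 / (s + N) := by
  induction N with
  | zero => simp
  | succ n ih =>
    rw [Finset.sum_Icc_succ_top (by omega)]
    have telescope : 1 / (s + (n + 1 : ℕ)) ^ 2 ≤ 1 / (s + n) - 1 / (s + (n + 1 : ℕ)) := by
      push_cast
      rw [div_sub_div _ _ (by positivity) (by positivity),
        div_le_div_iff₀ (by positivity) (by positivity)]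
      nlinarith
    linarith

lemma sum_Icc_one_div_add_sq_le {a : ℝ} (ha : 0 < a) (N : ℕ) :
    ∑ i ∈ Finset.Icc 1 N, 1 / (a + (i : ℝ) ^ 2) ≤ 2 / √a := by
  set s := √a
  have hs : 0 < s := Real.sqrt_pos.2 ha
  have hsa : s ^ 2 = a := Real.sq_sqrt ha.le
  calc ∑ i ∈ Finset.Icc 1 N, 1 / (a + (i : ℝ) ^ 2)
      ≤ ∑ i ∈ Finset.Icc 1 N, 2 * (1 / (s + i) ^ 2) := by
        gcongr with i
        rw [mul_one_div, div_le_div_iff₀ (by positivity) (by positivity)]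
        nlinarith [sq_nonneg (s - i)]
    _ ≤ 2 * (1 / s - 1 / (s + N)) := by
        rw [← Finset.mul_sum]
        gcongr
        exact sum_Icc_one_div_add_sq_le_sub hs N
    _ ≤ 2 / s := by
        have : 0 ≤ 1 / (s + N) := by positivity
        rw [div_eq_mul_one_div 2 s]
        linarith

lemma mul_sq_le_of_half_mul_abs_le {v x a b : ℝ} (hv : 0 < v)
    (h : v / 2 * |x| ≤ a + b) : v * x ^ 2 ≤ 8 * (a ^ 2 + b ^ 2) / v := by
  rw [le_div_iff₀ hv]
  have hvx : v * |x| ≤ 2 * (a + b) := by linarith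
  have : (v * |x|) ^ 2 ≤ (2 * (a + b)) ^ 2 := by gcongr
  rw [mul_pow, sq_abs] at this
  nlinarith [sq_nonneg (a - b)]

lemma mul_indicator_one_sq (c : ℝ) (s : Set ℝ) (v : ℝ) :
    (c * s.indicator (fun _ => (1 : ℝ)) v) ^ 2 = c ^ 2 * s.indicator (fun _ => (1 : ℝ)) v := by
  by_cases hv : v ∈ s <;> simp [hv]

lemma indicator_Icc_one_div_le {a b v : ℝ} (ha : 0 < a) :
    (Icc a b).indicator (fun _ => (1 : ℝ)) v / v ≤
      (Icc a b).indicator (fun _ => (1 : ℝ)) v / a := by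
  by_cases hv : v ∈ Icc a b
  · simp only [indicator_of_mem hv]
    exact one_div_le_one_div_of_le ha hv.1
  · simp [hv]

lemma indicator_biUnion_Icc_one_div_le {ι : Type*} (t : Finset ι) {a b : ι → ℝ}
    (ha : ∀ i ∈ t, 0 < a i) (v : ℝ) :
    (⋃ i ∈ t, Icc (a i) (b i)).indicator (fun _ => (1 : ℝ)) v / v ≤
      ∑ i ∈ t, (Icc (a i) (b i)).indicator (fun _ => (1 : ℝ)) v / a i := by
  have hterm : ∀ j ∈ t, 0 ≤ (Icc (a j) (b j)).indicator (fun _ => (1 : ℝ)) v / a j :=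
    fun j hj => div_nonneg (indicator_nonneg (fun _ _ => zero_le_one) v) (ha j hj).le
  by_cases hv : v ∈ ⋃ i ∈ t, Icc (a i) (b i)
  · obtain ⟨i, hi, hvi⟩ := mem_iUnion₂.1 hv
    calc (⋃ i ∈ t, Icc (a i) (b i)).indicator (fun _ => (1 : ℝ)) v / v
        = (Icc (a i) (b i)).indicator (fun _ => (1 : ℝ)) v / v := by
          rw [indicator_of_mem hv, indicator_of_mem hvi]
      _ ≤ (Icc (a i) (b i)).indicator (fun _ => (1 : ℝ)) v / a i :=
          indicator_Icc_one_div_le (ha i hi)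
      _ ≤ _ := Finset.single_le_sum hterm hi
  · rw [indicator_of_notMem hv, zero_div]
    exact Finset.sum_nonneg hterm

lemma integrable_indicator_Icc_one (a b : ℝ) :
    Integrable ((Icc a b).indicator fun _ => (1 : ℝ)) :=
  (integrable_indicator_iff measurableSet_Icc).2 (integrableOn_const measure_Icc_lt_top.ne)

lemma integral_indicator_Icc_one {a b : ℝ} (hab : a ≤ b) :
    ∫ v, (Icc a b).indicator (fun _ => (1 : ℝ)) v = b - a := by
  rw [integral_indicator_const _ measurableSet_Icc, Real.volume_real_Icc_of_le hab, smul_eq_mul,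
    mul_one]

section PulseTrain

variable (η M δ vstar v₀ : ℝ) (N : ℕ)

noncomputable def pulseTrainMajorant (v : ℝ) : ℝ :=
  8 * η ^ 2 * ∑ i ∈ Finset.Icc 1 N,
      (Icc (vstar + (i : ℝ) ^ 2) (vstar + (i : ℝ) ^ 2 + 1)).indicator (fun _ => (1 : ℝ)) v /
        (vstar + (i : ℝ) ^ 2) +
    8 * (M / δ) * ((Icc v₀ (v₀ + δ)).indicator (fun _ => (1 : ℝ)) v / v₀)

variable {η M δ vstar v₀}

lemma pulseTrainMajorant_nonneg (hM : 0 ≤ M) (hδ : 0 < δ) (hvstar : 0 < vstar)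
    (hv₀ : 0 < v₀) (v : ℝ) : 0 ≤ pulseTrainMajorant η M δ vstar v₀ N v := by
  unfold pulseTrainMajorant
  have hind : ∀ s : Set ℝ, 0 ≤ s.indicator (fun _ => (1 : ℝ)) v :=
    fun s => indicator_nonneg (fun _ _ => zero_le_one) v
  have hpulse := hind (Icc v₀ (v₀ + δ))
  have htrain : 0 ≤ ∑ i ∈ Finset.Icc 1 N,
      (Icc (vstar + (i : ℝ) ^ 2) (vstar + (i : ℝ) ^ 2 + 1)).indicator (fun _ => (1 : ℝ)) v /
        (vstar + (i : ℝ) ^ 2) :=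
    Finset.sum_nonneg fun i _ => div_nonneg (hind _) (by positivity)
  positivity

lemma integrable_pulseTrainMajorant : Integrable (pulseTrainMajorant η M δ vstar v₀ N) :=
  ((integrable_finsetSum _ fun _ _ =>
      (integrable_indicator_Icc_one _ _).div_const _).const_mul _).add
    (((integrable_indicator_Icc_one _ _).div_const _).const_mul _)

lemma integral_pulseTrainMajorant (hδ : 0 < δ) :
    ∫ v, pulseTrainMajorant η M δ vstar v₀ N v =
      8 * η ^ 2 * ∑ i ∈ Finset.Icc 1 N, 1 / (vstar + (i : ℝ) ^ 2) + 8 * M / v₀ := by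
  unfold pulseTrainMajorant
  rw [integral_add (((integrable_finsetSum _ fun _ _ =>
      (integrable_indicator_Icc_one _ _).div_const _).const_mul _))
      (((integrable_indicator_Icc_one _ _).div_const _).const_mul _),
    integral_const_mul, integral_const_mul,
    integral_finsetSum _ fun _ _ => (integrable_indicator_Icc_one _ _).div_const _,
    integral_div, integral_indicator_Icc_one (by linarith)]
  simp only [integral_div, integral_indicator_Icc_one (le_add_of_nonneg_right zero_le_one),
    add_sub_cancel_left]
  field_simp

lemma le_pulseTrainMajorant {dvφ : ℝ → ℝ} (hM : 0 ≤ M) (hδ : 0 < δ) (hvstar : 0 < vstar)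
    (hv₀ : 0 < v₀) {v : ℝ} (hv : 0 < v)
    (hbound : v / 2 * |dvφ v| ≤
      η * (⋃ i ∈ Finset.Icc 1 N, Icc (vstar + (i : ℝ) ^ 2)
          (vstar + (i : ℝ) ^ 2 + 1)).indicator (fun _ => (1 : ℝ)) v +
        √M * (√δ)⁻¹ * (Icc v₀ (v₀ + δ)).indicator (fun _ => (1 : ℝ)) v) :
    v * dvφ v ^ 2 ≤ pulseTrainMajorant η M δ vstar v₀ N v := by
  have hsq : (√M * (√δ)⁻¹) ^ 2 = M / δ := by
    rw [mul_pow, inv_pow, Real.sq_sqrt hM, Real.sq_sqrt hδ.le, div_eq_mul_inv]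
  have := mul_sq_le_of_half_mul_abs_le hv hbound
  rw [mul_indicator_one_sq, mul_indicator_one_sq, hsq] at this
  have hS := indicator_biUnion_Icc_one_div_le (Finset.Icc 1 N)
    (a := fun i : ℕ => vstar + (i : ℝ) ^ 2) (b := fun i : ℕ => vstar + (i : ℝ) ^ 2 + 1)
    (fun i _ => by positivity) v
  have hI := indicator_Icc_one_div_le (b := v₀ + δ) (v := v) hv₀
  calc v * dvφ v ^ 2 ≤ _ := this
    _ = 8 * η ^ 2 * ((⋃ i ∈ Finset.Icc 1 N, Icc (vstar + (i : ℝ) ^ 2)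
            (vstar + (i : ℝ) ^ 2 + 1)).indicator (fun _ => (1 : ℝ)) v / v) +
          8 * (M / δ) * ((Icc v₀ (v₀ + δ)).indicator (fun _ => (1 : ℝ)) v / v) := by ring
    _ ≤ pulseTrainMajorant η M δ vstar v₀ N v := by
      unfold pulseTrainMajorant
      gcongr

end PulseTrain

/-- Estimate on the exponential weight for the pulse-train data: with `r(v) = v/2`,
`∂_v r = 1/2`, `β = r(∂_vφ)²/∂_v r = v(∂_vφ)²`, if
`r|∂_vφ| ≤ η·𝟙_S + √(M/δ)·𝟙_{[v₀,v₀+δ]}` where `S = ⋃_{i=1}^N [v_*+i², v_*+i²+1]`,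
then `∫_0^∞ β ≤ C(η² v_*^{−1/2} + M/v₀)` for a universal constant `C`. -/
theorem exponential_weight_estimate :
    ∃ C : ℝ, 0 < C ∧
    ∀ (dvφ : ℝ → ℝ) (η M δ vstar v₀ : ℝ) (N : ℕ),
      Measurable dvφ →
      0 ≤ η → 0 ≤ M → 0 < δ → 1 ≤ vstar → 0 < v₀ →
      (∀ v : ℝ, 0 < v →
        (v / 2) * |dvφ v| ≤
          η * Set.indicator (⋃ i ∈ Finset.Icc 1 N,
                Set.Icc (vstar + (i:ℝ)^2) (vstar + (i:ℝ)^2 + 1)) (fun _ => (1:ℝ)) v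
          + Real.sqrt M * (Real.sqrt δ)⁻¹ *
              Set.indicator (Set.Icc v₀ (v₀ + δ)) (fun _ => (1:ℝ)) v) →
      (∫ v in Set.Ioi (0:ℝ), v * (dvφ v) ^ 2) ≤
        C * (η ^ 2 / Real.sqrt vstar + M / v₀) := by
  refine ⟨16, by norm_num, fun dvφ η M δ vstar v₀ N _ _ hM hδ hvstar hv₀ hbound => ?_⟩
  have hvstar₀ : 0 < vstar := by linarith
  calc ∫ v in Ioi 0, v * dvφ v ^ 2
      ≤ ∫ v in Ioi 0, pulseTrainMajorant η M δ vstar v₀ N v := by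
        refine integral_mono_of_nonneg ?_ (integrable_pulseTrainMajorant N).integrableOn ?_ <;>
          filter_upwards [self_mem_ae_restrict measurableSet_Ioi] with v (hv : 0 < v)
        · positivity
        · exact le_pulseTrainMajorant N hM hδ hvstar₀ hv₀ hv (hbound v hv)
    _ ≤ ∫ v, pulseTrainMajorant η M δ vstar v₀ N v :=
        setIntegral_le_integral (integrable_pulseTrainMajorant N)
          (ae_of_all _ (pulseTrainMajorant_nonneg N hM hδ hvstar₀ hv₀))
    _ = 8 * η ^ 2 * ∑ i ∈ Finset.Icc 1 N, 1 / (vstar + (i : ℝ) ^ 2) + 8 * M / v₀ :=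
        integral_pulseTrainMajorant N hδ
    _ ≤ 8 * η ^ 2 * (2 / √vstar) + 8 * M / v₀ := by
        gcongr
        exact sum_Icc_one_div_add_sq_le hvstar₀ N
    _ ≤ 16 * (η ^ 2 / √vstar + M / v₀) := by
        have : 0 ≤ M / v₀ := div_nonneg hM hv₀.le
        rw [mul_div_assoc 8 M]
        linarith [show 8 * η ^ 2 * (2 / √vstar) = 16 * (η ^ 2 / √vstar) by ring]
end

section
/- Suppose ∂_v(r∂_uφ) = −(∂_u r)(∂_vφ) on [0,u₁]×[v₀,v₀+δ], with |∂_u r| ≤ 28/3 and r|∂_vφ| ≤ 4M^{1/2}δ^{−1/2} and r ≥ c > 0. Then |r∂_uφ(u,v) − r∂_uφ(u,v₀)| ≤ (28/3)(4 M^{1/2} δ^{−1/2}/c)·δ = (112/3)(M^{1/2}/c) δ^{1/2} for all v ∈ [v₀, v₀+δ]. -/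
/-- Short-pulse estimate for the ingoing derivative of the scalar field: if
`∂_v(r∂_uφ) = −(∂_u r)(∂_vφ)` on `[0,u₁]×[v₀,v₀+δ]` with `|∂_u r| ≤ 28/3`,
`r|∂_vφ| ≤ 4√M δ^{−1/2}` and `r ≥ c > 0`, then
`|r∂_uφ(u,v) − r∂_uφ(u,v₀)| ≤ (112/3)(√M/c)δ^{1/2}`. -/
theorem short_pulse_duphi (F dur dvφ r : ℝ → ℝ → ℝ) (u₁ v₀ δ M c : ℝ)
    (hδ : 0 < δ) (hc : 0 < c) (hM : 0 ≤ M)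
    (hderiv : ∀ u ∈ Set.Icc (0:ℝ) u₁, ∀ v ∈ Set.Icc v₀ (v₀ + δ),
      HasDerivAt (fun v' => F u v') (-(dur u v) * dvφ u v) v)
    (hdur : ∀ u ∈ Set.Icc (0:ℝ) u₁, ∀ v ∈ Set.Icc v₀ (v₀ + δ), |dur u v| ≤ 28/3)
    (hdvφ : ∀ u ∈ Set.Icc (0:ℝ) u₁, ∀ v ∈ Set.Icc v₀ (v₀ + δ),
      r u v * |dvφ u v| ≤ 4 * Real.sqrt M * (Real.sqrt δ)⁻¹)
    (hr : ∀ u ∈ Set.Icc (0:ℝ) u₁, ∀ v ∈ Set.Icc v₀ (v₀ + δ), c ≤ r u v) :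
    ∀ u ∈ Set.Icc (0:ℝ) u₁, ∀ v ∈ Set.Icc v₀ (v₀ + δ),
      |F u v - F u v₀| ≤ (112/3) * (Real.sqrt M / c) * Real.sqrt δ := by
  intro u hu v hv
  have hδ' : (0:ℝ) < Real.sqrt δ := Real.sqrt_pos.2 hδ
  set K : ℝ := (28/3) * (4 * Real.sqrt M * (Real.sqrt δ)⁻¹ / c) with hK
  have hbound : ∀ x ∈ Set.Icc v₀ (v₀ + δ), ‖-(dur u x) * dvφ u x‖ ≤ K := by
    intro x hx
    have h1 := hdur u hu x hx
    have h2 := hdvφ u hu x hx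
    have h3 := hr u hu x hx
    have hrpos : 0 < r u x := lt_of_lt_of_le hc h3
    have hφ : |dvφ u x| ≤ 4 * Real.sqrt M * (Real.sqrt δ)⁻¹ / c := by
      rw [le_div_iff₀ hc]
      calc |dvφ u x| * c ≤ |dvφ u x| * r u x := by
            apply mul_le_mul_of_nonneg_left h3 (abs_nonneg _)
        _ = r u x * |dvφ u x| := mul_comm _ _
        _ ≤ _ := h2
    have : ‖-(dur u x) * dvφ u x‖ = |dur u x| * |dvφ u x| := by
      rw [Real.norm_eq_abs, abs_mul, abs_neg]
    rw [this, hK]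
    apply mul_le_mul h1 hφ (abs_nonneg _) (by norm_num)
  have hconv : Convex ℝ (Set.Icc v₀ (v₀ + δ)) := convex_Icc _ _
  have hderiv' : ∀ x ∈ Set.Icc v₀ (v₀ + δ),
      HasDerivWithinAt (fun v' => F u v') (-(dur u x) * dvφ u x) (Set.Icc v₀ (v₀ + δ)) x :=
    fun x hx => (hderiv u hu x hx).hasDerivWithinAt
  have hv₀ : v₀ ∈ Set.Icc v₀ (v₀ + δ) := ⟨le_refl _, by linarith⟩
  have hmvt := hconv.norm_image_sub_le_of_norm_hasDerivWithin_le hderiv' hbound hv₀ hv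
  rw [Real.norm_eq_abs] at hmvt
  have hvd : ‖v - v₀‖ ≤ δ := by
    rw [Real.norm_eq_abs, abs_le]; constructor <;> [linarith [hv.1]; linarith [hv.2]]
  have hKnn : 0 ≤ K := by
    rw [hK]; positivity
  calc |F u v - F u v₀| ≤ K * ‖v - v₀‖ := hmvt
    _ ≤ K * δ := by exact mul_le_mul_of_nonneg_left hvd hKnn
    _ = (112/3) * (Real.sqrt M / c) * Real.sqrt δ := by
        have hs : (Real.sqrt δ)⁻¹ * δ = Real.sqrt δ := by
          rw [inv_mul_eq_div, Real.div_sqrt]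
        rw [hK]
        calc (28/3) * (4 * Real.sqrt M * (Real.sqrt δ)⁻¹ / c) * δ
            = (112/3) * (Real.sqrt M / c) * ((Real.sqrt δ)⁻¹ * δ) := by ring
          _ = (112/3) * (Real.sqrt M / c) * Real.sqrt δ := by rw [hs]
end

section
/- Suppose f : [0, u₀'] → ℝ satisfies f(0) = 0 and |f'(u)| ≤ β(u)|f(u)| + β(u)·r(u)^{−1}·A, where β(u) = 2m(u)(−∂_u r)(u)/((1−2m/r)r²)(u) ≥ 0 with ∫_0^{u₀'} β ≤ ε and ∫_0^{u} β(u')·r(u')^{−1} du' ≤ A' r(u)^{−2}. Then |f(u)| ≤ e^{ε} A A' r(u)^{−2}. -/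
open Set intervalIntegral

/-- Grönwall-type estimate after the short pulse: if `f(0) = 0`,
`|f'(u)| ≤ β(u)|f(u)| + β(u)r(u)⁻¹A` with `β ≥ 0`, `∫_0^{u₀'} β ≤ ε`, and
`∫_0^u β/r ≤ A' r(u)^{−2}`, then `|f(u)| ≤ e^ε A A' r(u)^{−2}`. -/
theorem gronwall_after_pulse (f f' β r : ℝ → ℝ) (u₀' ε A A' : ℝ)
    (hu₀' : 0 ≤ u₀') (hA : 0 ≤ A) (hA' : 0 ≤ A')
    (hrpos : ∀ u ∈ Set.Icc (0:ℝ) u₀', 0 < r u)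
    (hβpos : ∀ u ∈ Set.Icc (0:ℝ) u₀', 0 ≤ β u)
    (hβcont : ContinuousOn β (Set.Icc (0:ℝ) u₀'))
    (hrcont : ContinuousOn r (Set.Icc (0:ℝ) u₀'))
    (hf0 : f 0 = 0)
    (hderiv : ∀ u ∈ Set.Icc (0:ℝ) u₀', HasDerivAt f (f' u) u)
    (hf' : ∀ u ∈ Set.Icc (0:ℝ) u₀', |f' u| ≤ β u * |f u| + β u * (r u)⁻¹ * A)
    (hβint : (∫ u in (0:ℝ)..u₀', β u) ≤ ε)
    (hβr : ∀ u ∈ Set.Icc (0:ℝ) u₀', (∫ t in (0:ℝ)..u, β t * (r t)⁻¹) ≤ A' * (r u)⁻¹ ^ 2) :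
    ∀ u ∈ Set.Icc (0:ℝ) u₀', |f u| ≤ Real.exp ε * A * A' * (r u)⁻¹ ^ 2 := by
  -- extend β and r to all of ℝ via the projection onto the interval
  set π : ℝ → ℝ := fun t => (Set.projIcc (0:ℝ) u₀' hu₀' t : ℝ) with hπ
  have hmem : ∀ t, π t ∈ Set.Icc (0:ℝ) u₀' := fun t => (Set.projIcc (0:ℝ) u₀' hu₀' t).2
  have hπc : Continuous π := continuous_projIcc.subtype_val
  have hπid : ∀ t ∈ Set.Icc (0:ℝ) u₀', π t = t := by
    intro t ht; simp [hπ, Set.projIcc_of_mem hu₀' ht]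
  set p : ℝ → ℝ := fun t => β (π t) with hp
  set q : ℝ → ℝ := fun t => β (π t) * (r (π t))⁻¹ with hq
  have hpc : Continuous p := hβcont.comp_continuous hπc hmem
  have hrc : Continuous fun t => r (π t) := hrcont.comp_continuous hπc hmem
  have hqc : Continuous q := hpc.mul (hrc.inv₀ fun t => (hrpos _ (hmem t)).ne')
  have hp0 : ∀ t, 0 ≤ p t := fun t => hβpos _ (hmem t)
  have hq0 : ∀ t, 0 ≤ q t := fun t =>
    mul_nonneg (hp0 t) (inv_nonneg.2 (hrpos _ (hmem t)).le)
  set I : ℝ → ℝ := fun t => ∫ s in (0:ℝ)..t, p s with hI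
  set C : ℝ → ℝ := fun t => ∫ s in (0:ℝ)..t, q s with hC
  have hI' : ∀ x, HasDerivAt I (p x) x := fun x =>
    (hpc.integral_hasStrictDerivAt 0 x).hasDerivAt
  have hC' : ∀ x, HasDerivAt C (q x) x := fun x =>
    (hqc.integral_hasStrictDerivAt 0 x).hasDerivAt
  -- identify the modified integrals with the original ones on the interval
  have hIeq : ∀ t ∈ Set.Icc (0:ℝ) u₀', I t = ∫ s in (0:ℝ)..t, β s := by
    intro t ht
    refine intervalIntegral.integral_congr fun s hs => ?_
    rw [Set.uIcc_of_le ht.1] at hs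
    have hs' : s ∈ Set.Icc (0:ℝ) u₀' := ⟨hs.1, hs.2.trans ht.2⟩
    simp [hp, hπid s hs']
  have hCeq : ∀ t ∈ Set.Icc (0:ℝ) u₀', C t = ∫ s in (0:ℝ)..t, β s * (r s)⁻¹ := by
    intro t ht
    refine intervalIntegral.integral_congr fun s hs => ?_
    rw [Set.uIcc_of_le ht.1] at hs
    have hs' : s ∈ Set.Icc (0:ℝ) u₀' := ⟨hs.1, hs.2.trans ht.2⟩
    simp [hq, hπid s hs']
  have hInonneg : ∀ t, 0 ≤ t → 0 ≤ I t := fun t ht =>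
    intervalIntegral.integral_nonneg ht fun s _ => hp0 s
  -- the Grönwall majorant
  set G : ℝ → ℝ := fun t => A * (Real.exp (I t) * C t) with hG
  set G' : ℝ → ℝ := fun t => A * (Real.exp (I t) * p t * C t + Real.exp (I t) * q t)
    with hG'def
  have hGd : ∀ x, HasDerivAt G (G' x) x := fun x => ((hI' x).exp.mul (hC' x)).const_mul A
  -- a uniform bound on β
  obtain ⟨M, hM⟩ : ∃ M, ∀ t, p t ≤ M := by
    obtain ⟨M, hM⟩ := isCompact_Icc.exists_bound_of_continuousOn hβcont
    exact ⟨M, fun t => (le_abs_self _).trans ((Real.norm_eq_abs _ ▸ hM _ (hmem t)))⟩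
  have hM0 : 0 ≤ M := (hp0 0).trans (hM 0)
  -- continuity and one-sided derivatives of f
  have hfc : ContinuousOn f (Set.Icc (0:ℝ) u₀') := fun x hx =>
    (hderiv x hx).continuousAt.continuousWithinAt
  have hfd : ∀ x ∈ Set.Ico (0:ℝ) u₀', HasDerivWithinAt f (f' x) (Set.Ici x) x :=
    fun x hx => (hderiv x (Set.Ico_subset_Icc_self hx)).hasDerivWithinAt
  -- key pointwise inequality for the majorant derivative
  have hkey : ∀ x ∈ Set.Ico (0:ℝ) u₀', ∀ y : ℝ, |f x| ≤ y →
      |f' x| ≤ p x * y + G' x - p x * G x := by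
    intro x hx y hy
    have hx' : x ∈ Set.Icc (0:ℝ) u₀' := Set.Ico_subset_Icc_self hx
    have hpx : p x = β x := by simp [hp, hπid x hx']
    have hqx : q x = β x * (r x)⁻¹ := by simp [hq, hπid x hx']
    have h1 : |f' x| ≤ β x * |f x| + β x * (r x)⁻¹ * A := hf' x hx'
    have hexp : (1:ℝ) ≤ Real.exp (I x) := Real.one_le_exp (hInonneg x hx.1)
    have hqnn := hq0 x
    have h2 : β x * (r x)⁻¹ * A ≤ G' x - p x * G x := by
      have heq : G' x - p x * G x = A * (Real.exp (I x) * q x) := by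
        simp only [hG'def, hG]; ring
      have hB : 0 ≤ β x * (r x)⁻¹ := hqx ▸ hqnn
      rw [heq, hqx]
      nlinarith [mul_nonneg hA hB, hexp]
    have h3 : β x * |f x| ≤ p x * y := by
      rw [hpx]
      exact mul_le_mul_of_nonneg_left hy (hβpos x hx')
    linarith
  -- Grönwall via δ-perturbation and the strict fencing theorem
  have hfG : ∀ u ∈ Set.Icc (0:ℝ) u₀', |f u| ≤ G u := by
    intro u hu
    have hall : ∀ δ : ℝ, 0 < δ → |f u| ≤ G u + δ * Real.exp ((M + 1) * u) := by
      intro δ hδ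
      set Gd : ℝ → ℝ := fun t => G t + δ * Real.exp ((M + 1) * t) with hGdDef
      set Gd' : ℝ → ℝ := fun t => G' t + δ * (Real.exp ((M + 1) * t) * (M + 1)) with hGd'Def
      have hGdd : ∀ x, HasDerivAt Gd (Gd' x) x := by
        intro x
        have h1 : HasDerivAt (fun t : ℝ => (M + 1) * t) (M + 1) x := by
          simpa using (hasDerivAt_id x).const_mul (M + 1)
        exact (hGd x).add (h1.exp.const_mul δ)
      have ha0 : ‖f 0‖ ≤ Gd 0 := by
        have : G 0 = 0 := by simp [hG, hC, intervalIntegral.integral_same]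
        simp only [hGdDef, hf0, this, Real.norm_eq_abs, abs_zero, mul_zero, Real.exp_zero,
          mul_one, zero_add]
        positivity
      have hbound : ∀ x ∈ Set.Ico (0:ℝ) u₀', ‖f x‖ = Gd x → ‖f' x‖ < Gd' x := by
        intro x hx hfx
        rw [Real.norm_eq_abs] at hfx ⊢
        have h1 := hkey x hx (Gd x) hfx.le
        have hE : 0 < Real.exp ((M + 1) * x) := Real.exp_pos _
        have h2 : p x * Gd x = p x * G x + p x * (δ * Real.exp ((M + 1) * x)) := by
          simp only [hGdDef]; ring
        have h3 : p x * (δ * Real.exp ((M + 1) * x)) ≤ M * (δ * Real.exp ((M + 1) * x)) :=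
          mul_le_mul_of_nonneg_right (hM x) (by positivity)
        have h4 : M * (δ * Real.exp ((M + 1) * x)) < (M + 1) * (δ * Real.exp ((M + 1) * x)) := by
          have : 0 < δ * Real.exp ((M + 1) * x) := by positivity
          nlinarith
        have : Gd' x = G' x + (M + 1) * (δ * Real.exp ((M + 1) * x)) := by
          simp only [hGd'Def]; ring
        linarith
      have := image_norm_le_of_norm_deriv_right_lt_deriv_boundary hfc hfd ha0 hGdd hbound hu
      rwa [Real.norm_eq_abs] at this
    -- let δ → 0
    by_contra hcon
    push_neg at hcon
    set c : ℝ := Real.exp ((M + 1) * u) with hc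
    have hcpos : 0 < c := Real.exp_pos _
    have hδ : 0 < (|f u| - G u) / (2 * c) := div_pos (by linarith) (by positivity)
    have hbd := hall _ hδ
    have heq : (|f u| - G u) / (2 * c) * c = (|f u| - G u) / 2 := by
      field_simp
    rw [heq] at hbd
    linarith
  -- conclude
  intro u hu
  have hfu := hfG u hu
  have hIu : I u ≤ ε := by
    have hsplit : I u + (∫ s in u..u₀', p s) = I u₀' :=
      intervalIntegral.integral_add_adjacent_intervals
        (hpc.intervalIntegrable 0 u) (hpc.intervalIntegrable u u₀')
    have htail : 0 ≤ ∫ s in u..u₀', p s :=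
      intervalIntegral.integral_nonneg hu.2 fun s _ => hp0 s
    have hItop : I u₀' ≤ ε := by
      rw [hIeq u₀' ⟨hu₀', le_rfl⟩]; exact hβint
    linarith
  have hCu : C u ≤ A' * (r u)⁻¹ ^ 2 := by
    rw [hCeq u hu]; exact hβr u hu
  have hCu0 : 0 ≤ C u := intervalIntegral.integral_nonneg hu.1 fun s _ => hq0 s
  calc |f u| ≤ A * (Real.exp (I u) * C u) := hfu
    _ ≤ A * (Real.exp ε * (A' * (r u)⁻¹ ^ 2)) := by
        gcongr <;> first
          | exact Real.exp_le_exp.2 hIu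
          | exact hCu
    _ = Real.exp ε * A * A' * (r u)⁻¹ ^ 2 := by ring
end
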